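/- arXiv:math/9905112 — 12 statements merged into one kernel-verified Lean document; each statement's English description precedes it below -/
import Mathlib

section
/- Let z : ℝ × ℝ → ℂ be Fréchet differentiable at (x, y), with partial derivatives z_x = ∂z/∂x(x,y) and z_y = ∂z/∂y(x,y) both nonzero. Then, as ε → 0 through nonzero real values, the cross-ratio [z(x, y+ε) : z(x, y) : z(x+ε, y) : z(x+ε, y+ε)] = ((z(x,y+ε) − z(x,y))·(z(x+ε,y) − z(x+ε,y+ε))) / ((z(x,y) − z(x+ε,y))·(z(x+ε,y+ε) − z(x,y+ε))) tends to z_y² / z_x². In particular the limit equals −1 if and only if z_y² = −z_x², i.e. precisely when z is weakly conformal at (x, y). -/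
open Filter Topology

/-- The cross-ratio of four points `a b c d : ℂ`:
`[a : b : c : d] = ((a − b)(c − d)) / ((b − c)(d − a))`. -/
noncomputable def crossRatio (a b c d : ℂ) : ℂ :=
  ((a - b) * (c - d)) / ((b - c) * (d - a))

/-- If `z : ℝ × ℝ → ℂ` is Fréchet differentiable at `(x, y)` with nonzero partial
derivatives `z_x`, `z_y`, then as `ε → 0` through nonzero real values the cross-ratio
`[z(x, y+ε) : z(x, y) : z(x+ε, y) : z(x+ε, y+ε)]` tends to `z_y² / z_x²`; in particular
the limit is `−1` iff `z_y² = −z_x²`, i.e. precisely when `z` is weakly conformal. -/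
theorem crossRatio_limit_of_differentiable
    (z : ℝ × ℝ → ℂ) (x y : ℝ) (L : ℝ × ℝ →L[ℝ] ℂ)
    (hz : HasFDerivAt z L (x, y))
    (zx zy : ℂ) (hzx : zx = L (1, 0)) (hzy : zy = L (0, 1))
    (hzx0 : zx ≠ 0) (hzy0 : zy ≠ 0) :
    Tendsto (fun ε : ℝ =>
        crossRatio (z (x, y + ε)) (z (x, y)) (z (x + ε, y)) (z (x + ε, y + ε)))
      (𝓝[≠] (0 : ℝ)) (𝓝 (zy ^ 2 / zx ^ 2)) ∧
    (zy ^ 2 / zx ^ 2 = -1 ↔ zy ^ 2 = -zx ^ 2) := by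
  constructor
  · -- curves
    have hc1 : HasDerivAt (fun ε : ℝ => ((x : ℝ), y + ε)) ((0 : ℝ), (1 : ℝ)) 0 := by
      simpa using HasDerivAt.prodMk (hasDerivAt_const (0:ℝ) x) ((hasDerivAt_const (0:ℝ) y).add (hasDerivAt_id 0))
    have hc2 : HasDerivAt (fun ε : ℝ => (x + ε, (y : ℝ))) ((1 : ℝ), (0 : ℝ)) 0 := by
      simpa using HasDerivAt.prodMk ((hasDerivAt_const (0:ℝ) x).add (hasDerivAt_id 0)) (hasDerivAt_const (0:ℝ) y)
    have hc3 : HasDerivAt (fun ε : ℝ => (x + ε, y + ε)) ((1 : ℝ), (1 : ℝ)) 0 := by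
      simpa using HasDerivAt.prodMk ((hasDerivAt_const (0:ℝ) x).add (hasDerivAt_id 0))
        ((hasDerivAt_const (0:ℝ) y).add (hasDerivAt_id 0))
    have hz' : HasFDerivAt z L ((fun ε : ℝ => ((x : ℝ), y + ε)) 0) := by simpa using hz
    have hz'' : HasFDerivAt z L ((fun ε : ℝ => (x + ε, (y : ℝ))) 0) := by simpa using hz
    have hz''' : HasFDerivAt z L ((fun ε : ℝ => (x + ε, y + ε)) 0) := by simpa using hz
    have h1 : HasDerivAt (fun ε : ℝ => z (x, y + ε)) (L (0, 1)) 0 :=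
      hz'.comp_hasDerivAt 0 hc1
    have h2 : HasDerivAt (fun ε : ℝ => z (x + ε, y)) (L (1, 0)) 0 :=
      hz''.comp_hasDerivAt 0 hc2
    have h3 : HasDerivAt (fun ε : ℝ => z (x + ε, y + ε)) (L (1, 1)) 0 :=
      hz'''.comp_hasDerivAt 0 hc3
    -- the four slope limits
    have hA : Tendsto (fun ε : ℝ => (z (x, y + ε) - z (x, y)) / (ε : ℂ))
        (𝓝[≠] (0 : ℝ)) (𝓝 zy) := by
      have := hasDerivAt_iff_tendsto_slope.mp h1
      rw [hzy]
      refine this.congr fun ε => ?_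
      simp [slope, Complex.real_smul, div_eq_inv_mul]
    have hB : Tendsto (fun ε : ℝ => (z (x + ε, y) - z (x + ε, y + ε)) / (ε : ℂ))
        (𝓝[≠] (0 : ℝ)) (𝓝 (-zy)) := by
      have h23 : HasDerivAt (fun ε : ℝ => z (x + ε, y) - z (x + ε, y + ε))
          (L (1, 0) - L (1, 1)) 0 := h2.sub h3
      have := hasDerivAt_iff_tendsto_slope.mp h23
      have heq : L (1, 0) - L (1, 1) = -zy := by
        rw [hzy, ← ContinuousLinearMap.map_sub]
        have : ((1 : ℝ), (0 : ℝ)) - (1, 1) = -(0, 1) := by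
          simp [Prod.ext_iff]
        rw [this, ContinuousLinearMap.map_neg]
      rw [heq] at this
      refine this.congr fun ε => ?_
      simp [slope, Complex.real_smul, div_eq_inv_mul]
    have hC : Tendsto (fun ε : ℝ => (z (x, y) - z (x + ε, y)) / (ε : ℂ))
        (𝓝[≠] (0 : ℝ)) (𝓝 (-zx)) := by
      have h02 : HasDerivAt (fun ε : ℝ => z (x, y) - z (x + ε, y)) (0 - L (1, 0)) 0 :=
        (hasDerivAt_const 0 (z (x, y))).sub h2
      have := hasDerivAt_iff_tendsto_slope.mp h02
      rw [show (0 : ℂ) - L (1, 0) = -zx by rw [hzx]; ring] at this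
      refine this.congr fun ε => ?_
      simp [slope, Complex.real_smul, div_eq_inv_mul]
    have hD : Tendsto (fun ε : ℝ => (z (x + ε, y + ε) - z (x, y + ε)) / (ε : ℂ))
        (𝓝[≠] (0 : ℝ)) (𝓝 zx) := by
      have h31 : HasDerivAt (fun ε : ℝ => z (x + ε, y + ε) - z (x, y + ε))
          (L (1, 1) - L (0, 1)) 0 := h3.sub h1
      have := hasDerivAt_iff_tendsto_slope.mp h31
      have heq : L (1, 1) - L (0, 1) = zx := by
        have hp : ((1:ℝ),(1:ℝ)) - ((0:ℝ),(1:ℝ)) = ((1:ℝ),(0:ℝ)) := by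
          simp [Prod.ext_iff]
        rw [hzx, ← ContinuousLinearMap.map_sub, hp]
      rw [heq] at this
      refine this.congr fun ε => ?_
      simp [slope, Complex.real_smul, div_eq_inv_mul]
    have hden : (-zx) * zx ≠ 0 := mul_ne_zero (neg_ne_zero.mpr hzx0) hzx0
    have hlim := ((hA.mul hB).div (hC.mul hD) hden)
    have hval : zy * -zy / (-zx * zx) = zy ^ 2 / zx ^ 2 := by
      field_simp
    rw [hval] at hlim
    refine hlim.congr' ?_
    filter_upwards [self_mem_nhdsWithin] with ε (hε : ε ≠ 0)
    have hεC : (ε : ℂ) ≠ 0 := by exact_mod_cast hε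
    simp only [Pi.div_apply]
    unfold crossRatio
    field_simp
  · rw [div_eq_iff (pow_ne_zero 2 hzx0), neg_one_mul]
end

section
/- Let a, b ∈ ℂ with a ≠ b, let λ ∈ ℂ ∖ {0}, and set A = P(a, b). For every z ∈ ℂ with z ∉ {a, b}, writing (p, s)ᵀ = (I − λ⁻¹·A)·(z, 1)ᵀ, one has (z − a)·(b·s − p) = λ·(a − b)·(p − z·s). That is, in homogeneous coordinates the matrix T^λ = I − λ⁻¹·A represents the Möbius transformation sending z to the unique point w with cross-ratio [z : a : b : w] = λ. -/
open Matrix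

/-- For distinct `u w : ℂ`, `Pmat u w = (w − u)⁻¹ • [[w, −u·w], [1, −u]]` is the unique
idempotent 2×2 matrix with kernel spanned by `(u, 1)ᵀ` and image spanned by `(w, 1)ᵀ`. -/
noncomputable def Pmat (u w : ℂ) : Matrix (Fin 2) (Fin 2) ℂ :=
  (w - u)⁻¹ • !![w, -(u * w); 1, -u]

theorem Pmat_mulVec (u w x y : ℂ) :
    Pmat u w *ᵥ ![x, y] = ((x - u * y) / (w - u)) • ![w, 1] := by
  ext i
  fin_cases i <;> simp [Pmat, mulVec, dotProduct, Fin.sum_univ_two] <;> ring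

theorem one_sub_smul_Pmat_mulVec (t u w x y : ℂ) :
    (1 - t • Pmat u w) *ᵥ ![x, y] =
      ![x - t * ((x - u * y) / (w - u)) * w, y - t * ((x - u * y) / (w - u))] := by
  rw [sub_mulVec, one_mulVec, smul_mulVec, Pmat_mulVec, smul_smul]
  ext i
  fin_cases i <;> simp

theorem edgeMatrix_crossRatio_general (a b lam z : ℂ) (hab : a ≠ b) (hlam : lam ≠ 0)
    (p s : ℂ)
    (hps : ![p, s] = ((1 : Matrix (Fin 2) (Fin 2) ℂ) - lam⁻¹ • Pmat a b) *ᵥ ![z, 1]) :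
    (z - a) * (b * s - p) = lam * (a - b) * (p - z * s) := by
  rw [one_sub_smul_Pmat_mulVec, mul_one] at hps
  set c := lam⁻¹ * ((z - a) / (b - a)) with hc_def
  obtain ⟨rfl, rfl⟩ : p = z - c * b ∧ s = 1 - c := by simpa using hps
  have hc : lam * (a - b) * c = -(z - a) := by
    have : b - a ≠ 0 := sub_ne_zero.mpr hab.symm
    rw [hc_def]
    field_simp
    ring
  -- now `b * s - p = b - z` and `p - z * s = c * (z - b)`
  linear_combination (b - z) * hc

/-- For `a ≠ b`, `λ ≠ 0` and `z ∉ {a, b}`, writing `(p, s)ᵀ = (I − λ⁻¹·P(a,b))·(z, 1)ᵀ`,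
one has `(z − a)·(b·s − p) = λ·(a − b)·(p − z·s)`: in homogeneous coordinates the matrix
`T^λ = I − λ⁻¹·P(a,b)` represents the Möbius transformation sending `z` to the unique
point `w` with cross-ratio `[z : a : b : w] = λ`. -/
theorem edgeMatrix_crossRatio (a b lam z : ℂ) (hab : a ≠ b) (hlam : lam ≠ 0)
    (hza : z ≠ a) (hzb : z ≠ b) (p s : ℂ)
    (hps : ![p, s] = ((1 : Matrix (Fin 2) (Fin 2) ℂ) - lam⁻¹ • Pmat a b) *ᵥ ![z, 1]) :
    (z - a) * (b * s - p) = lam * (a - b) * (p - z * s) :=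
  edgeMatrix_crossRatio_general a b lam z hab hlam p s hps
end

section
/- Let n ≥ 1 and let A₀, …, A_{n−1} be 2×2 complex matrices satisfying A_{k+1}·A_k = 0 for all 0 ≤ k ≤ n−2. Then every entry of the matrix polynomial H(X) = (I − X·A_{n−1})·(I − X·A_{n−2})⋯(I − X·A₀) ∈ M₂(ℂ[X]) has degree at most n/2 when n is even and at most (n+1)/2 when n is odd (i.e. at most ⌈n/2⌉). -/
/-!
When `B * B' = 0` the cross term of `(1 - X B)(1 - X B')` vanishes, so the product of two
consecutive edge factors is again a single factor `1 - X (B + B')`, of degree one. Pairing the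
factors of the holonomy from the top therefore writes it as a product of `⌈n/2⌉` factors whose
entries have degree at most one.
-/

open Matrix Polynomial

section

variable {R m : Type*} [CommRing R]

theorem degree_mul_apply_le [Fintype m] {M N : Matrix m m R[X]} {a b : WithBot ℕ}
    (hM : ∀ i j, (M i j).degree ≤ a) (hN : ∀ i j, (N i j).degree ≤ b) (i j : m) :
    ((M * N) i j).degree ≤ a + b := by
  rw [mul_apply]
  refine (degree_sum_le _ _).trans (Finset.sup_le fun k _ => ?_)
  exact (degree_mul_le _ _).trans (add_le_add (hM i k) (hN k j))

variable [DecidableEq m]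

/-- The edge map `I - λ⁻¹ A` of the paper, with `X` standing for `λ⁻¹`. -/
noncomputable def linearFactor (B : Matrix m m R) : Matrix m m R[X] :=
  1 - (X : R[X]) • B.map C

theorem degree_linearFactor_apply_le (B : Matrix m m R) (i j : m) :
    (linearFactor B i j).degree ≤ 1 := by
  rw [linearFactor, Matrix.sub_apply, Matrix.smul_apply, map_apply, smul_eq_mul]
  refine (degree_sub_le _ _).trans (max_le ?_ ?_)
  · rw [one_apply]
    split_ifs
    · exact degree_one_le.trans zero_le_one
    · simp
  · calc (X * C (B i j)).degree ≤ (X : R[X]).degree + (C (B i j)).degree := degree_mul_le _ _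
      _ ≤ 1 + 0 := add_le_add degree_X_le degree_C_le
      _ = 1 := add_zero 1

variable [Fintype m]

theorem linearFactor_mul_linearFactor {B B' : Matrix m m R} (h : B * B' = 0) :
    linearFactor B * linearFactor B' = linearFactor (B + B') := by
  have hBB' : B.map C * B'.map C = 0 := by
    rw [← Matrix.map_mul, h, Matrix.map_zero _ (map_zero C)]
  simp only [linearFactor, sub_mul, mul_sub, one_mul, mul_one, Matrix.smul_mul,
    Matrix.mul_smul, hBB', smul_zero, sub_zero, Matrix.map_add _ (map_add C), smul_add]
  abel

noncomputable def holonomy (A : ℕ → Matrix m m R) (n : ℕ) : Matrix m m R[X] :=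
  ((List.range n).reverse.map fun k => linearFactor (A k)).prod

theorem holonomy_add_two (A : ℕ → Matrix m m R) (n : ℕ) (h : A (n + 1) * A n = 0) :
    holonomy A (n + 2) = linearFactor (A (n + 1) + A n) * holonomy A n := by
  rw [holonomy, holonomy, List.range_succ, List.range_succ]
  simp only [List.reverse_append, List.reverse_cons, List.reverse_nil, List.nil_append,
    List.cons_append, List.map_cons, List.prod_cons]
  rw [← mul_assoc, linearFactor_mul_linearFactor h]

theorem degree_holonomy_apply_le (A : ℕ → Matrix m m R) (n : ℕ)
    (hA : ∀ k, k + 2 ≤ n → A (k + 1) * A k = 0) (i j : m) :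
    (holonomy A n i j).degree ≤ ((n + 1) / 2 : ℕ) := by
  induction n using Nat.twoStepInduction generalizing i j with
  | zero =>
    rw [holonomy, List.range_zero, List.reverse_nil, List.map_nil, List.prod_nil, one_apply]
    split_ifs <;> simp
  | one => simpa [holonomy] using degree_linearFactor_apply_le (A 0) i j
  | more n ih _ =>
    rw [holonomy_add_two A n (hA n le_rfl)]
    refine (degree_mul_apply_le (degree_linearFactor_apply_le _)
      (ih fun k hk => hA k (by omega)) i j).trans_eq ?_
    rw [show (n + 2 + 1) / 2 = 1 + (n + 1) / 2 by omega, Nat.cast_add, Nat.cast_one]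

end

theorem holonomy_degree_bound_general (n : ℕ)
    (A : ℕ → Matrix (Fin 2) (Fin 2) ℂ)
    (hA : ∀ k : ℕ, k + 2 ≤ n → A (k + 1) * A k = 0) :
    ∀ i j : Fin 2,
      ((((List.range n).reverse.map
          (fun k => (1 : Matrix (Fin 2) (Fin 2) ℂ[X]) -
            (X : ℂ[X]) • (A k).map C)).prod) i j).degree
        ≤ (((n + 1) / 2 : ℕ) : WithBot ℕ) :=
  degree_holonomy_apply_le A n hA

/-- Degree bound for the holonomy of a discrete curve (Lemma 2.1): if
`A₀, …, A_{n−1}` are 2×2 complex matrices with `A_{k+1}·A_k = 0` for `0 ≤ k ≤ n−2`,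
then every entry of `H(X) = (I − X·A_{n−1})⋯(I − X·A₀)` has degree at most `⌈n/2⌉`,
i.e. at most `n/2` for `n` even and `(n+1)/2` for `n` odd. -/
theorem holonomy_degree_bound (n : ℕ) (hn : 1 ≤ n)
    (A : ℕ → Matrix (Fin 2) (Fin 2) ℂ)
    (hA : ∀ k : ℕ, k + 2 ≤ n → A (k + 1) * A k = 0) :
    ∀ i j : Fin 2,
      ((((List.range n).reverse.map
          (fun k => (1 : Matrix (Fin 2) (Fin 2) ℂ[X]) -
            (X : ℂ[X]) • (A k).map C)).prod) i j).degree
        ≤ (((n + 1) / 2 : ℕ) : WithBot ℕ) :=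
  holonomy_degree_bound_general n A hA
end

section
/- Let q ∈ ℂ ∖ {0, 1} and let a, b, c, d ∈ ℂ be pairwise distinct with (a − b)(c − d) = q·(b − c)(d − a), i.e. cross-ratio [a : b : c : d] = q. Set A = P(b, c), A′ = P(a, d), Â = P(b, a), Â′ = P(c, d). Then: (a) Â′·A = 0 = A′·Â, so in particular Â′·A = A′·Â; (b) A + q·Â′ = A′ + q·Â; and consequently, for every λ ∈ ℂ ∖ {0}, (I − (q/λ)·Â′)·(I − λ⁻¹·A) = (I − λ⁻¹·A′)·(I − (q/λ)·Â). (Taking a = z_{k,m+1}, b = z_{k,m}, c = z_{k+1,m}, d = z_{k+1,m+1} for a discrete conformal map z, this is the identity T̂^{λ/q}_{k+1,m} ∘ T^λ_{k,m} = T^λ_{k,m+1} ∘ T̂^{λ/q}_{k,m} which shows the trace-free holonomy evolves by conjugation: M^λ_{k,m+1} = T̂^{λ/q}_{k,m} ∘ M^λ_{k,m} ∘ (T̂^{λ/q}_{k,m})⁻¹.) -/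
/-!
`Pmat u w` kills `(u, 1)ᵀ`, which spans the image of `Pmat v u`; this gives (a). Clearing the
normalising denominators `w − u`, (b) becomes a linear relation among the four matrices
`[[w, −u·w], [1, −u]]` with coefficients `c − b, d − a, a − b, d − c`, which is a polynomial
identity; the cross-ratio condition is what turns those coefficients into `1` and `q`. Finally (c)
holds in any ring: if `y·x = 0 = x'·y'` and `x + y = x' + y'`, then
`(1 − y)(1 − x) = 1 − (x + y) = (1 − x')(1 − y')`.
-/

open Matrix

theorem Pmat_mul_Pmat_eq_zero (u v w : ℂ) : Pmat u w * Pmat v u = 0 := by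
  ext i j
  fin_cases i <;> fin_cases j <;> simp [Pmat, Matrix.mul_apply, Fin.sum_univ_two] <;> ring

theorem sub_smul_Pmat {u w : ℂ} (h : u ≠ w) : (w - u) • Pmat u w = !![w, -(u * w); 1, -u] := by
  rw [Pmat, smul_smul, mul_inv_cancel₀ (sub_ne_zero.mpr h.symm), one_smul]

theorem Pmat_linear_relation {a b c d : ℂ} (hab : a ≠ b) (had : a ≠ d) (hbc : b ≠ c)
    (hcd : c ≠ d) :
    ((c - b) * (d - a)) • Pmat b c + ((a - b) * (d - c)) • Pmat c d =
      ((c - b) * (d - a)) • Pmat a d + ((a - b) * (d - c)) • Pmat b a := by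
  rw [mul_comm (c - b), mul_smul, sub_smul_Pmat hbc, mul_smul, sub_smul_Pmat hcd,
    mul_comm (d - a), mul_smul, sub_smul_Pmat had, mul_comm (a - b), mul_smul,
    sub_smul_Pmat hab.symm]
  ext i j
  fin_cases i <;> fin_cases j <;> simp <;> ring

theorem Pmat_add_smul_eq_of_crossRatio_eq {q a b c d : ℂ} (hab : a ≠ b) (had : a ≠ d)
    (hbc : b ≠ c) (hcd : c ≠ d) (hcr : (a - b) * (c - d) = q * ((b - c) * (d - a))) :
    Pmat b c + q • Pmat c d = Pmat a d + q • Pmat b a := by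
  have hs : (c - b) * (d - a) ≠ 0 :=
    mul_ne_zero (sub_ne_zero.mpr hbc.symm) (sub_ne_zero.mpr had.symm)
  have hq : (c - b) * (d - a) * q = (a - b) * (d - c) := by linear_combination hcr
  apply smul_right_injective _ hs
  simp only [smul_add, smul_smul, hq]
  exact Pmat_linear_relation hab had hbc hcd

theorem one_sub_mul_one_sub_eq {R : Type*} [Ring R] {x y x' y' : R} (h : y * x = 0)
    (h' : x' * y' = 0) (hsum : x + y = x' + y') :
    (1 - y) * (1 - x) = (1 - x') * (1 - y') := by
  have expand : ∀ s t : R, (1 - s) * (1 - t) = 1 - (t + s) + s * t := fun s t => by noncomm_ring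
  rw [expand, expand, h, h', hsum, add_comm x']

theorem lax_compatibility_general (q a b c d : ℂ)
    (hab : a ≠ b) (had : a ≠ d)
    (hbc : b ≠ c) (hcd : c ≠ d)
    (hcr : (a - b) * (c - d) = q * ((b - c) * (d - a))) :
    (Pmat c d * Pmat b c = 0 ∧ Pmat a d * Pmat b a = 0) ∧
    (Pmat b c + q • Pmat c d = Pmat a d + q • Pmat b a) ∧
    (∀ lam : ℂ, lam ≠ 0 →
      ((1 : Matrix (Fin 2) (Fin 2) ℂ) - (q / lam) • Pmat c d) *
        ((1 : Matrix (Fin 2) (Fin 2) ℂ) - lam⁻¹ • Pmat b c) =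
      ((1 : Matrix (Fin 2) (Fin 2) ℂ) - lam⁻¹ • Pmat a d) *
        ((1 : Matrix (Fin 2) (Fin 2) ℂ) - (q / lam) • Pmat b a)) := by
  have hsum := Pmat_add_smul_eq_of_crossRatio_eq hab had hbc hcd hcr
  refine ⟨⟨Pmat_mul_Pmat_eq_zero c b d, Pmat_mul_Pmat_eq_zero a b d⟩, hsum, fun lam _ => ?_⟩
  apply one_sub_mul_one_sub_eq
  · rw [smul_mul_smul_comm, Pmat_mul_Pmat_eq_zero, smul_zero]
  · rw [smul_mul_smul_comm, Pmat_mul_Pmat_eq_zero, smul_zero]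
  · rw [div_eq_inv_mul, mul_smul, mul_smul, ← smul_add, ← smul_add, hsum]

/-- If `a, b, c, d` are pairwise distinct with cross-ratio `[a : b : c : d] = q ∉ {0,1}`,
then with `A = P(b,c)`, `A′ = P(a,d)`, `Â = P(b,a)`, `Â′ = P(c,d)`:
(a) `Â′·A = 0 = A′·Â`; (b) `A + q·Â′ = A′ + q·Â`; and consequently for every `λ ≠ 0`,
`(I − (q/λ)·Â′)·(I − λ⁻¹·A) = (I − λ⁻¹·A′)·(I − (q/λ)·Â)` — the identity
`T̂^{λ/q}_{k+1,m} ∘ T^λ_{k,m} = T^λ_{k,m+1} ∘ T̂^{λ/q}_{k,m}` showing the trace-free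
holonomy evolves by conjugation. -/
theorem lax_compatibility (q a b c d : ℂ) (hq0 : q ≠ 0) (hq1 : q ≠ 1)
    (hab : a ≠ b) (hac : a ≠ c) (had : a ≠ d)
    (hbc : b ≠ c) (hbd : b ≠ d) (hcd : c ≠ d)
    (hcr : (a - b) * (c - d) = q * ((b - c) * (d - a))) :
    (Pmat c d * Pmat b c = 0 ∧ Pmat a d * Pmat b a = 0) ∧
    (Pmat b c + q • Pmat c d = Pmat a d + q • Pmat b a) ∧
    (∀ lam : ℂ, lam ≠ 0 →
      ((1 : Matrix (Fin 2) (Fin 2) ℂ) - (q / lam) • Pmat c d) *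
        ((1 : Matrix (Fin 2) (Fin 2) ℂ) - lam⁻¹ • Pmat b c) =
      ((1 : Matrix (Fin 2) (Fin 2) ℂ) - lam⁻¹ • Pmat a d) *
        ((1 : Matrix (Fin 2) (Fin 2) ℂ) - (q / lam) • Pmat b a)) :=
  lax_compatibility_general q a b c d hab had hbc hcd hcr
end

section
/- Let α, β ∈ ℂ ∖ {0}, let z : ℤ² → ℂ be a discrete conformal map with cross-ratio q = β²/α², and let u_{k,m} = z_{k+1,m} − z_{k,m}, v_{k,m} = z_{k,m+1} − z_{k,m}. Then for every (k, m) ∈ ℤ² and every λ ∈ ℂ ∖ {0}, the discrete Lax equation U_{k,m}(λ)·V_{k+1,m}(λ) = V_{k,m}(λ)·U_{k,m+1}(λ) holds. -/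
open Matrix

/-- `z : ℤ² → ℂ` is a discrete conformal map with cross-ratio `q ∈ ℂ ∖ {0,1}`:
each fundamental quadrilateral has pairwise distinct vertices and cross-ratio `q`. -/
def IsDCM (q : ℂ) (z : ℤ → ℤ → ℂ) : Prop :=
  q ≠ 0 ∧ q ≠ 1 ∧ ∀ k m : ℤ,
    (z k m ≠ z (k+1) m ∧ z k m ≠ z k (m+1) ∧ z k m ≠ z (k+1) (m+1) ∧
     z (k+1) m ≠ z k (m+1) ∧ z (k+1) m ≠ z (k+1) (m+1) ∧ z k (m+1) ≠ z (k+1) (m+1)) ∧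
    (z k (m+1) - z k m) * (z (k+1) m - z (k+1) (m+1)) =
      q * ((z k m - z (k+1) m) * (z (k+1) (m+1) - z k (m+1)))

/-- The Lax matrix `U_{k,m}(λ) = [[1, α²·u⁻¹·λ⁻¹], [u, 1]]`. -/
noncomputable def Umat (α u lam : ℂ) : Matrix (Fin 2) (Fin 2) ℂ :=
  !![1, α ^ 2 * u⁻¹ * lam⁻¹; u, 1]

/-- The Lax matrix `V_{k,m}(λ) = [[1, β²·v⁻¹·λ⁻¹], [v, 1]]`. -/
noncomputable def Vmat (β v lam : ℂ) : Matrix (Fin 2) (Fin 2) ℂ :=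
  !![1, β ^ 2 * v⁻¹ * lam⁻¹; v, 1]

/-- For a discrete conformal map `z` with cross-ratio `q = β²/α²` and
`u_{k,m} = z_{k+1,m} − z_{k,m}`, `v_{k,m} = z_{k,m+1} − z_{k,m}`, the discrete Lax
equation `U_{k,m}(λ)·V_{k+1,m}(λ) = V_{k,m}(λ)·U_{k,m+1}(λ)` holds for all `k, m`
and all `λ ≠ 0`. -/
theorem dcm_lax_equation (α β : ℂ) (hα : α ≠ 0) (hβ : β ≠ 0)
    (z : ℤ → ℤ → ℂ) (hz : IsDCM (β ^ 2 / α ^ 2) z)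
    (u v : ℤ → ℤ → ℂ)
    (hu : ∀ k m : ℤ, u k m = z (k+1) m - z k m)
    (hv : ∀ k m : ℤ, v k m = z k (m+1) - z k m) :
    ∀ (k m : ℤ) (lam : ℂ), lam ≠ 0 →
      Umat α (u k m) lam * Vmat β (v (k+1) m) lam =
      Vmat β (v k m) lam * Umat α (u k (m+1)) lam := by

  intro k m lam hlam
  obtain ⟨hq0, hq1, hcr⟩ := hz
  obtain ⟨⟨d1, d2, d3, d4, d5, d6⟩, hq⟩ := hcr k m
  have ha : u k m ≠ 0 := by rw [hu]; exact sub_ne_zero.mpr (Ne.symm d1)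
  have hb : v (k+1) m ≠ 0 := by rw [hv]; exact sub_ne_zero.mpr (Ne.symm d5)
  have hc : v k m ≠ 0 := by rw [hv]; exact sub_ne_zero.mpr (Ne.symm d2)
  have hd : u k (m+1) ≠ 0 := by rw [hu]; exact sub_ne_zero.mpr (Ne.symm d6)
  have hsum : u k m + v (k+1) m = v k m + u k (m+1) := by
    rw [hu, hu, hv, hv]; ring
  have hkey : α ^ 2 * (v k m * v (k+1) m) = β ^ 2 * (u k m * u k (m+1)) := by
    have hα2 : (α : ℂ) ^ 2 ≠ 0 := pow_ne_zero 2 hα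
    rw [hu, hu, hv, hv]
    field_simp at hq
    linear_combination -hq
  ext i j
  fin_cases i <;> fin_cases j
  · simp [Umat, Vmat, Matrix.mul_apply, Fin.sum_univ_two]
    field_simp
    linear_combination hkey
  · simp [Umat, Vmat, Matrix.mul_apply, Fin.sum_univ_two]
    field_simp
    linear_combination (u k (m+1) - u k m) * hkey - β ^ 2 * u k m * u k (m+1) * hsum
  · simp [Umat, Vmat, Matrix.mul_apply, Fin.sum_univ_two]
    linear_combination hsum
  · simp [Umat, Vmat, Matrix.mul_apply, Fin.sum_univ_two]
    field_simp
    linear_combination -hkey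
end

section
/- Let α, β ∈ ℂ ∖ {0}, let z : ℤ² → ℂ be a discrete conformal map with cross-ratio q = β²/α², let (k, m) ∈ ℤ², let λ ∈ ℂ ∖ {0, α², β²}, and let G be any invertible 2×2 complex matrix. With e₁ = (1, 0)ᵀ, set F₀₀ = G·e₁, F₁₀ = G·U_{k,m}(λ)·e₁, F₀₁ = G·V_{k,m}(λ)·e₁, and F₁₁ = G·U_{k,m}(λ)·V_{k+1,m}(λ)·e₁. Then det(F₀₁ | F₀₀) · det(F₁₀ | F₁₁) · α² · (λ − β²) = β² · (λ − α²) · det(F₀₀ | F₁₀) · det(F₁₁ | F₀₁), where det(u | w) is the determinant of the 2×2 matrix with columns u and w. (This says the family of maps z(λ) obtained from the extended frame of z has cross-ratio β²(1 − λ⁻¹α²)/(α²(1 − λ⁻¹β²)), the key identity of Proposition 4.2.) -/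
open Matrix

/-- `det2 u w` is the determinant of the 2×2 matrix with columns `u` and `w`. -/
def det2 (u w : Fin 2 → ℂ) : ℂ := u 0 * w 1 - u 1 * w 0

lemma det2_mulVec (A : Matrix (Fin 2) (Fin 2) ℂ) (x y : Fin 2 → ℂ) :
    det2 (A *ᵥ x) (A *ᵥ y) = A.det * det2 x y := by
  simp [det2, Matrix.mulVec, dotProduct, Matrix.det_fin_two, Fin.sum_univ_two]
  ring

/-- The key identity of Proposition 4.2: for a discrete conformal map `z` of
cross-ratio `β²/α²`, the lifts `F = Φ·e₁` obtained from its extended frame satisfy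
`det(F₀₁|F₀₀)·det(F₁₀|F₁₁)·α²·(λ − β²) = β²·(λ − α²)·det(F₀₀|F₁₀)·det(F₁₁|F₀₁)`,
i.e. the family `z(λ)` has cross-ratio `β²(1 − λ⁻¹α²)/(α²(1 − λ⁻¹β²))`. -/
theorem frame_crossRatio (α β : ℂ) (hα : α ≠ 0) (hβ : β ≠ 0)
    (z : ℤ → ℤ → ℂ) (hz : IsDCM (β ^ 2 / α ^ 2) z)
    (u v : ℤ → ℤ → ℂ)
    (hu : ∀ k m : ℤ, u k m = z (k+1) m - z k m)
    (hv : ∀ k m : ℤ, v k m = z k (m+1) - z k m)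
    (k m : ℤ) (lam : ℂ) (h0 : lam ≠ 0) (ha : lam ≠ α ^ 2) (hb : lam ≠ β ^ 2)
    (G : Matrix (Fin 2) (Fin 2) ℂ) (hG : IsUnit G)
    (F00 F10 F01 F11 : Fin 2 → ℂ)
    (h00 : F00 = G *ᵥ ![1, 0])
    (h10 : F10 = (G * Umat α (u k m) lam) *ᵥ ![1, 0])
    (h01 : F01 = (G * Vmat β (v k m) lam) *ᵥ ![1, 0])
    (h11 : F11 = (G * Umat α (u k m) lam * Vmat β (v (k+1) m) lam) *ᵥ ![1, 0]) :
    det2 F01 F00 * det2 F10 F11 * α ^ 2 * (lam - β ^ 2) =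
      β ^ 2 * (lam - α ^ 2) * (det2 F00 F10 * det2 F11 F01) := by
  obtain ⟨-, -, hzkm⟩ := hz
  obtain ⟨⟨hne, -⟩, hcr⟩ := hzkm k m
  set U := u k m with hU
  set V := v k m with hV
  set V' := v (k+1) m with hV'
  have hUne : U ≠ 0 := by
    rw [hU, hu]; exact sub_ne_zero.mpr (Ne.symm hne)
  have hrel : α ^ 2 * (V * V') = β ^ 2 * (U * (U + V' - V)) := by
    have h := hcr
    rw [div_mul_eq_mul_div, eq_div_iff (pow_ne_zero 2 hα)] at h
    rw [hU, hV, hV', hu, hv, hv]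
    linear_combination -h
  subst h00 h10 h01 h11
  rw [mul_assoc G, ← mulVec_mulVec, ← mulVec_mulVec, ← mulVec_mulVec, ← mulVec_mulVec]
  have e1 : (Umat α U lam *ᵥ ![1, 0]) = ![1, U] := by
    ext i; fin_cases i <;> simp [Matrix.mulVec, dotProduct, Umat]
  have e2 : (Vmat β V lam *ᵥ ![1, 0]) = ![1, V] := by
    ext i; fin_cases i <;> simp [Matrix.mulVec, dotProduct, Vmat]
  have e3 : (Umat α U lam *ᵥ Vmat β V' lam *ᵥ ![1, 0]) =
      ![1 + α ^ 2 * U⁻¹ * lam⁻¹ * V', U + V'] := by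
    ext i; fin_cases i <;> simp [Matrix.mulVec, dotProduct, Umat, Vmat]
  rw [e1, e2, e3, det2_mulVec, det2_mulVec, det2_mulVec, det2_mulVec]
  simp only [det2, Matrix.cons_val_zero, Matrix.cons_val_one, Matrix.head_cons]
  field_simp
  linear_combination (G.det ^ 2 * (α ^ 2 - lam) * U * lam) * hrel
end

section
/- Let α, β ∈ ℂ ∖ {0} and let u, v : ℤ² → ℂ ∖ {0} be maps such that the Lax equation U_{k,m}(λ)·V_{k+1,m}(λ) = V_{k,m}(λ)·U_{k,m+1}(λ) holds for all (k, m) ∈ ℤ² and all λ ∈ ℂ ∖ {0}. Then for all (k, m): u_{k,m} + v_{k+1,m} = v_{k,m} + u_{k,m+1}, and α²·v_{k,m}·v_{k+1,m} = β²·u_{k,m}·u_{k,m+1}. Consequently, any map z : ℤ² → ℂ with z_{k+1,m} − z_{k,m} = u_{k,m} and z_{k,m+1} − z_{k,m} = v_{k,m} for all (k, m) satisfies (z_{k,m+1} − z_{k,m})·(z_{k+1,m} − z_{k+1,m+1}) = (β²/α²)·(z_{k,m} − z_{k+1,m})·(z_{k+1,m+1} − z_{k,m+1}) at every quadrilateral;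 i.e. any Lax pair of the form (4.2) produces a discrete conformal map of cross-ratio β²/α². -/
open Matrix

/-- Any Lax pair of the form (4.2) produces a discrete conformal map of cross-ratio
`β²/α²`: if `U_{k,m}(λ)·V_{k+1,m}(λ) = V_{k,m}(λ)·U_{k,m+1}(λ)` for all `k, m` and
all `λ ≠ 0`, then `u_{k,m} + v_{k+1,m} = v_{k,m} + u_{k,m+1}` and
`α²·v_{k,m}·v_{k+1,m} = β²·u_{k,m}·u_{k,m+1}`; consequently any `z` with
`z_{k+1,m} − z_{k,m} = u_{k,m}`, `z_{k,m+1} − z_{k,m} = v_{k,m}` satisfies the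
discrete conformality condition with cross-ratio `β²/α²`. -/
theorem lax_gives_dcm (α β : ℂ) (hα : α ≠ 0) (hβ : β ≠ 0)
    (u v : ℤ → ℤ → ℂ) (hu : ∀ k m : ℤ, u k m ≠ 0) (hv : ∀ k m : ℤ, v k m ≠ 0)
    (hLax : ∀ (k m : ℤ) (lam : ℂ), lam ≠ 0 →
      Umat α (u k m) lam * Vmat β (v (k+1) m) lam =
      Vmat β (v k m) lam * Umat α (u k (m+1)) lam) :
    (∀ k m : ℤ, u k m + v (k+1) m = v k m + u k (m+1)) ∧
    (∀ k m : ℤ, α ^ 2 * (v k m * v (k+1) m) = β ^ 2 * (u k m * u k (m+1))) ∧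
    (∀ z : ℤ → ℤ → ℂ,
      (∀ k m : ℤ, z (k+1) m - z k m = u k m ∧ z k (m+1) - z k m = v k m) →
      ∀ k m : ℤ,
        (z k (m+1) - z k m) * (z (k+1) m - z (k+1) (m+1)) =
          (β ^ 2 / α ^ 2) * ((z k m - z (k+1) m) * (z (k+1) (m+1) - z k (m+1)))) := by
  have key : ∀ k m : ℤ,
      u k m + v (k+1) m = v k m + u k (m+1) ∧
      α ^ 2 * (v k m * v (k+1) m) = β ^ 2 * (u k m * u k (m+1)) := by
    intro k m
    have h := hLax k m 1 one_ne_zero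
    have h10 := congrFun (congrFun h 1) 0
    have h00 := congrFun (congrFun h 0) 0
    simp [Umat, Vmat, Matrix.mul_apply, Fin.sum_univ_two] at h10 h00
    constructor
    · linear_combination h10
    · field_simp [hu k m, hv k m] at h00
      linear_combination h00
  refine ⟨fun k m => (key k m).1, fun k m => (key k m).2, ?_⟩
  intro z hz k m
  have h1 := (hz k m).1
  have h2 := (hz k m).2
  have h3 := (hz (k+1) m).2
  have h4 := (hz k (m+1)).1
  have hk := (key k m).2
  have hα2 : α ^ 2 ≠ 0 := pow_ne_zero _ hα
  rw [h2]
  have e3 : z (k+1) m - z (k+1) (m+1) = -(v (k+1) m) := by linear_combination -h3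
  have e1 : z k m - z (k+1) m = -(u k m) := by linear_combination -h1
  rw [e3, e1, h4]
  field_simp
  linear_combination -hk
end

section
/- Let C, D ∈ ℂ ∖ {0, 1} with C ≠ D and C·D ≠ 1. Then the discrete exponential z : ℤ² → ℂ, z_{k,m} = C^k·D^m, is a discrete conformal map with cross-ratio q = C·(1 − D)² / (D·(1 − C)²). -/
section GeometricQuad

variable {K : Type*} [Field K]

lemma mul_one_sub_sq_sub_mul_one_sub_sq (C D : K) :
    C * (1 - D) ^ 2 - D * (1 - C) ^ 2 = (C - D) * (1 - C * D) := by
  ring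

lemma geometricQuad_crossRatio_ne_zero {C D : K} (hC0 : C ≠ 0) (hC1 : C ≠ 1) (hD0 : D ≠ 0)
    (hD1 : D ≠ 1) : C * (1 - D) ^ 2 / (D * (1 - C) ^ 2) ≠ 0 := by
  have h1C : (1 : K) - C ≠ 0 := sub_ne_zero.mpr hC1.symm
  have h1D : (1 : K) - D ≠ 0 := sub_ne_zero.mpr hD1.symm
  positivity

lemma geometricQuad_crossRatio_ne_one {C D : K} (hCD : C ≠ D) (hCD1 : C * D ≠ 1) :
    C * (1 - D) ^ 2 / (D * (1 - C) ^ 2) ≠ 1 := by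
  refine div_ne_one_of_ne (sub_ne_zero.mp ?_)
  rw [mul_one_sub_sq_sub_mul_one_sub_sq]
  exact mul_ne_zero (sub_ne_zero.mpr hCD) (sub_ne_zero.mpr hCD1.symm)

lemma geometricQuad_pairwise_ne {w C D : K} (hw : w ≠ 0) (hC0 : C ≠ 0) (hC1 : C ≠ 1)
    (hD0 : D ≠ 0) (hD1 : D ≠ 1) (hCD : C ≠ D) (hCD1 : C * D ≠ 1) :
    w ≠ w * C ∧ w ≠ w * D ∧ w ≠ w * C * D ∧
      w * C ≠ w * D ∧ w * C ≠ w * C * D ∧ w * D ≠ w * C * D := by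
  refine ⟨?_, ?_, ?_, ?_, ?_, ?_⟩ <;> intro h
  · exact hC1 (mul_left_cancel₀ hw (by linear_combination -h))
  · exact hD1 (mul_left_cancel₀ hw (by linear_combination -h))
  · exact hCD1 (mul_left_cancel₀ hw (by linear_combination -h))
  · exact hCD (mul_left_cancel₀ hw h)
  · exact hD1 (mul_left_cancel₀ (mul_ne_zero hw hC0) (by linear_combination -h))
  · exact hC1 (mul_left_cancel₀ (mul_ne_zero hw hD0) (by linear_combination -h))

lemma geometricQuad_crossRatio_eq (w : K) {C D : K} (hC1 : C ≠ 1) (hD0 : D ≠ 0) :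
    (w * D - w) * (w * C - w * C * D) =
      C * (1 - D) ^ 2 / (D * (1 - C) ^ 2) * ((w - w * C) * (w * C * D - w * D)) := by
  have h1C : (1 : K) - C ≠ 0 := sub_ne_zero.mpr hC1.symm
  field_simp
  ring

end GeometricQuad

/-- The discrete exponential `z_{k,m} = C^k·D^m` (with `C, D ∉ {0,1}`, `C ≠ D`,
`C·D ≠ 1`) is a discrete conformal map with cross-ratio `C·(1 − D)²/(D·(1 − C)²)`. -/
theorem discreteExponential_isDCM (C D : ℂ)
    (hC0 : C ≠ 0) (hC1 : C ≠ 1) (hD0 : D ≠ 0) (hD1 : D ≠ 1)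
    (hCD : C ≠ D) (hCD1 : C * D ≠ 1) :
    IsDCM (C * (1 - D) ^ 2 / (D * (1 - C) ^ 2)) (fun k m : ℤ => C ^ k * D ^ m) := by
  refine ⟨geometricQuad_crossRatio_ne_zero hC0 hC1 hD0 hD1,
    geometricQuad_crossRatio_ne_one hCD hCD1, fun k m => ?_⟩
  have hw : C ^ k * D ^ m ≠ 0 := mul_ne_zero (zpow_ne_zero k hC0) (zpow_ne_zero m hD0)
  have h10 : C ^ (k + 1) * D ^ m = C ^ k * D ^ m * C := by rw [zpow_add_one₀ hC0]; ring
  have h01 : C ^ k * D ^ (m + 1) = C ^ k * D ^ m * D := by rw [zpow_add_one₀ hD0]; ring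
  have h11 : C ^ (k + 1) * D ^ (m + 1) = C ^ k * D ^ m * C * D := by
    rw [zpow_add_one₀ hC0, zpow_add_one₀ hD0]; ring
  simp only [h10, h01, h11]
  exact ⟨geometricQuad_pairwise_ne hw hC0 hC1 hD0 hD1 hCD hCD1,
    geometricQuad_crossRatio_eq _ hC1 hD0⟩
end

section
/- Let a, b, ε, y ∈ ℂ ∖ {0} with a ∉ {y, −y, ε, −ε}, b ∉ {y, −y} and ε ≠ y. Define z : ℤ² → ℂ by z_{k,m} = h_{k,m}(y). Then for every (k, m) ∈ ℤ², (z_{k,m+1} − z_{k,m})·(z_{k+1,m} − z_{k+1,m+1}) = q·(z_{k,m} − z_{k+1,m})·(z_{k+1,m+1} − z_{k,m+1}), where q = ((a² − y²)(b² − ε²)) / ((b² − y²)(a² − ε²)); i.e. the zigzag map built from the rational spectral curve is a discrete conformal map with cross-ratio q = λ(Q). -/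
/-!
Writing `X = A^k B^m`, the four corners of the quad at `(k, m)` are `X·(1, BE, AE, AB)` when
`k + m` is even and `X·(E, B, A, ABE)` when it is odd; in both cases the two sides of the
cross-ratio equation are `X²·A(1 - BE)(B - E)` and `q·X²·B(1 - AE)(A - E)`. For the Cayley-type
parametrisation `A = (a - y)/(a + y)`, `B = (b - y)/(b + y)`, `E = (ε + y)/(ε - y)` one has
`(1 - BE)(B - E) = 4y²(b² - ε²)/((b + y)²(ε - y)²)`, and the ratio of the two sides is
exactly `λ = (a² - y²)(b² - ε²)/((b² - y²)(a² - ε²))`.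
-/

/-- `hfun a b ε y k m = A^k·B^m·E^δ` where `A = (a−y)/(a+y)`, `B = (b−y)/(b+y)`,
`E = (ε+y)/(ε−y)`, and `δ = 1` if `k+m` is odd, `δ = 0` if `k+m` is even. -/
noncomputable def hfun (a b ε y : ℂ) (k m : ℤ) : ℂ :=
  ((a - y) / (a + y)) ^ k * ((b - y) / (b + y)) ^ m *
    (if Even (k + m) then 1 else (ε + y) / (ε - y))

section

variable {K : Type*} [Field K]

def zigzag (A B E : K) (k m : ℤ) : K :=
  A ^ k * B ^ m * if Even (k + m) then 1 else E

def IsDiscreteConformal (q : K) (z : ℤ → ℤ → K) : Prop :=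
  ∀ k m : ℤ, (z k (m + 1) - z k m) * (z (k + 1) m - z (k + 1) (m + 1)) =
    q * ((z k m - z (k + 1) m) * (z (k + 1) (m + 1) - z k (m + 1)))

theorem zigzag_isDiscreteConformal {A B E q : K} (hA : A ≠ 0) (hB : B ≠ 0)
    (hq : A * ((1 - B * E) * (B - E)) = q * (B * ((1 - A * E) * (A - E)))) :
    IsDiscreteConformal q (zigzag A B E) := by
  intro k m
  have hk : k + (m + 1) = k + m + 1 := by ring
  have hm : k + 1 + m = k + m + 1 := by ring
  have hkm : k + 1 + (m + 1) = k + m + 1 + 1 := by ring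
  simp only [zigzag, hk, hm, hkm, zpow_add_one₀ hA, zpow_add_one₀ hB, Int.even_add_one, not_not]
  rcases Int.even_or_odd (k + m) with h | h
  · simp only [h, not_true_eq_false, if_true, if_false]
    linear_combination (A ^ k * B ^ m) ^ 2 * hq
  · simp only [Int.not_even_iff_odd.mpr h, not_false_eq_true, if_true, if_false]
    linear_combination (A ^ k * B ^ m) ^ 2 * hq

theorem cayley_one_sub_mul_mul_sub {b ε y : K} (hb : b + y ≠ 0) (hε : ε - y ≠ 0) :
    (1 - (b - y) / (b + y) * ((ε + y) / (ε - y))) * ((b - y) / (b + y) - (ε + y) / (ε - y)) =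
      4 * y ^ 2 * (b ^ 2 - ε ^ 2) / ((b + y) ^ 2 * (ε - y) ^ 2) := by
  field_simp
  ring

theorem cayley_crossRatio_identity {a b ε y q : K} (ha : a + y ≠ 0) (hb : b + y ≠ 0)
    (hε : ε - y ≠ 0) (hby : b ^ 2 - y ^ 2 ≠ 0) (haε : a ^ 2 - ε ^ 2 ≠ 0)
    (hq : q = (a ^ 2 - y ^ 2) * (b ^ 2 - ε ^ 2) / ((b ^ 2 - y ^ 2) * (a ^ 2 - ε ^ 2))) :
    (a - y) / (a + y) * ((1 - (b - y) / (b + y) * ((ε + y) / (ε - y))) *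
        ((b - y) / (b + y) - (ε + y) / (ε - y))) =
      q * ((b - y) / (b + y) * ((1 - (a - y) / (a + y) * ((ε + y) / (ε - y))) *
        ((a - y) / (a + y) - (ε + y) / (ε - y)))) := by
  rw [cayley_one_sub_mul_mul_sub hb hε, cayley_one_sub_mul_mul_sub ha hε, hq]
  field_simp
  ring

theorem sq_sub_sq_ne_zero {a b : K} (h : a ≠ b) (h' : a ≠ -b) : a ^ 2 - b ^ 2 ≠ 0 :=
  sub_ne_zero.mpr fun hsq => (sq_eq_sq_iff_eq_or_eq_neg.mp hsq).elim h h'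

end

theorem zigzag_isDCM_general (a b ε y : ℂ)
    (hay : a ≠ y) (hay' : a ≠ -y) (hae : a ≠ ε) (hae' : a ≠ -ε)
    (hby : b ≠ y) (hby' : b ≠ -y) (hey : ε ≠ y)
    (z : ℤ → ℤ → ℂ) (hz : ∀ k m : ℤ, z k m = hfun a b ε y k m)
    (q : ℂ)
    (hq : q = ((a ^ 2 - y ^ 2) * (b ^ 2 - ε ^ 2)) /
              ((b ^ 2 - y ^ 2) * (a ^ 2 - ε ^ 2))) :
    ∀ k m : ℤ,
      (z k (m+1) - z k m) * (z (k+1) m - z (k+1) (m+1)) =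
        q * ((z k m - z (k+1) m) * (z (k+1) (m+1) - z k (m+1))) := by
  have ha : a + y ≠ 0 := fun h => hay' (eq_neg_of_add_eq_zero_left h)
  have hb : b + y ≠ 0 := fun h => hby' (eq_neg_of_add_eq_zero_left h)
  have hε : ε - y ≠ 0 := sub_ne_zero.mpr hey
  have hzig : z = zigzag ((a - y) / (a + y)) ((b - y) / (b + y)) ((ε + y) / (ε - y)) :=
    funext₂ hz
  rw [hzig]
  exact zigzag_isDiscreteConformal (div_ne_zero (sub_ne_zero.mpr hay) ha)
    (div_ne_zero (sub_ne_zero.mpr hby) hb) (cayley_crossRatio_identity ha hb hε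
      (sq_sub_sq_ne_zero hby hby') (sq_sub_sq_ne_zero hae hae') hq)

/-- The zigzag map `z_{k,m} = h_{k,m}(y)` built from the rational spectral curve is a
discrete conformal map with cross-ratio `q = ((a² − y²)(b² − ε²))/((b² − y²)(a² − ε²))`. -/
theorem zigzag_isDCM (a b ε y : ℂ)
    (ha0 : a ≠ 0) (hb0 : b ≠ 0) (he0 : ε ≠ 0) (hy0 : y ≠ 0)
    (hay : a ≠ y) (hay' : a ≠ -y) (hae : a ≠ ε) (hae' : a ≠ -ε)
    (hby : b ≠ y) (hby' : b ≠ -y) (hey : ε ≠ y)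
    (z : ℤ → ℤ → ℂ) (hz : ∀ k m : ℤ, z k m = hfun a b ε y k m)
    (q : ℂ)
    (hq : q = ((a ^ 2 - y ^ 2) * (b ^ 2 - ε ^ 2)) /
              ((b ^ 2 - y ^ 2) * (a ^ 2 - ε ^ 2))) :
    ∀ k m : ℤ,
      (z k (m+1) - z k m) * (z (k+1) m - z (k+1) (m+1)) =
        q * ((z k m - z (k+1) m) * (z (k+1) (m+1) - z k (m+1))) :=
  zigzag_isDCM_general a b ε y hay hay' hae hae' hby hby' hey z hz q hq
end

section
/- Let a, b, ε, x, y ∈ ℂ ∖ {0} with x ≠ y, x ≠ −y, a ∉ {x, −x, y, −y}, b ∉ {x, −x, y, −y}, ε ∉ {x, −x, y, −y}, let C ∈ ℂ ∖ {0}, set ρ = (y − x)/(y + x), and let z_{k,m} = h_{k,m}(y) · (ρ·h_{k,m}(x) − C) / (ρ⁻¹·h_{k,m}(x) − C). Fix k ∈ ℤ and suppose |(b − x)/(b + x)| < 1. Then: (i) as m → +∞, z_{k,m}/h_{k,m}(y) is eventually defined and tends to 1; and (ii) as m → −∞, z_{k,m}/h_{k,m}(y) is eventually defined and tends to (y − x)²/(y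 + x)². (Thus the discrete 1-soliton is asymptotic in m to the discrete exponential.) -/
open Filter Topology

lemma toNat_tendsto : Tendsto Int.toNat atTop atTop := by
  apply tendsto_atTop_atTop.mpr
  intro n
  exact ⟨(n : ℤ), fun a ha => (Int.le_toNat (le_trans (Int.ofNat_nonneg n) ha)).mpr ha⟩

lemma zpow_tendsto {B : ℂ} (hB : ‖B‖ < 1) :
    Tendsto (fun m : ℤ => B ^ m) atTop (𝓝 0) := by
  have h1 : Tendsto (fun n : ℕ => B ^ n) atTop (𝓝 0) :=
    tendsto_pow_atTop_nhds_zero_of_norm_lt_one hB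
  have h2 : Tendsto (fun m : ℤ => B ^ m.toNat) atTop (𝓝 0) := h1.comp toNat_tendsto
  refine h2.congr' ?_
  filter_upwards [eventually_ge_atTop (0 : ℤ)] with m hm
  rw [← zpow_natCast, Int.toNat_of_nonneg hm]

lemma aux_tendsto (A B E : ℂ) (hB : ‖B‖ < 1) (k : ℤ) :
    Tendsto (fun m : ℤ => A ^ k * B ^ m * (if Even (k + m) then (1:ℂ) else E))
      atTop (𝓝 0) := by
  have hb : Tendsto (fun m : ℤ => A ^ k * B ^ m) atTop (𝓝 0) := by
    simpa using (zpow_tendsto hB).const_mul (A ^ k)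
  apply squeeze_zero_norm (a := fun m : ℤ => ‖A ^ k * B ^ m‖ * max 1 ‖E‖)
  · intro m
    rw [norm_mul]
    gcongr
    split
    · simp
    · exact le_max_right _ _
  · simpa using (hb.norm.mul_const (max 1 ‖E‖))


/-- Asymptotics of the discrete 1-soliton: if `|(b − x)/(b + x)| < 1` then for fixed
`k`, `z_{k,m}/h_{k,m}(y)` is eventually defined and tends to `1` as `m → +∞` and to
`(y − x)²/(y + x)²` as `m → −∞`; i.e. the 1-soliton is asymptotic in `m` to the
discrete exponential. -/
theorem oneSoliton_asymptotics (a b ε x y : ℂ)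
    (ha0 : a ≠ 0) (hb0 : b ≠ 0) (he0 : ε ≠ 0) (hx0 : x ≠ 0) (hy0 : y ≠ 0)
    (hxy : x ≠ y) (hxy' : x ≠ -y)
    (hax : a ≠ x) (hax' : a ≠ -x) (hay : a ≠ y) (hay' : a ≠ -y)
    (hbx : b ≠ x) (hbx' : b ≠ -x) (hby : b ≠ y) (hby' : b ≠ -y)
    (hex : ε ≠ x) (hex' : ε ≠ -x) (hey : ε ≠ y) (hey' : ε ≠ -y)
    (C : ℂ) (hC : C ≠ 0) (ρ : ℂ) (hρ : ρ = (y - x) / (y + x))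
    (z : ℤ → ℤ → ℂ)
    (hz : ∀ k m : ℤ, z k m =
      hfun a b ε y k m * (ρ * hfun a b ε x k m - C) / (ρ⁻¹ * hfun a b ε x k m - C))
    (hB : ‖(b - x) / (b + x)‖ < 1) (k : ℤ) :
    ((∀ᶠ m : ℤ in atTop, ρ⁻¹ * hfun a b ε x k m - C ≠ 0) ∧
      Tendsto (fun m : ℤ => z k m / hfun a b ε y k m) atTop (𝓝 1)) ∧
    ((∀ᶠ m : ℤ in atBot, ρ⁻¹ * hfun a b ε x k m - C ≠ 0) ∧
      Tendsto (fun m : ℤ => z k m / hfun a b ε y k m) atBot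
        (𝓝 ((y - x) ^ 2 / (y + x) ^ 2))) := by
    -- basic nonvanishing facts
  have hsub : ∀ u v : ℂ, u ≠ v → u - v ≠ 0 := fun u v h => sub_ne_zero.mpr h
  have hadd : ∀ u v : ℂ, u ≠ -v → u + v ≠ 0 := fun u v h => by
    intro hc; exact h (by linear_combination hc)
  have hyx : y - x ≠ 0 := hsub _ _ (Ne.symm hxy)
  have hyx' : y + x ≠ 0 := fun hc => hxy' (by linear_combination hc)
  have hρ0 : ρ ≠ 0 := by rw [hρ]; exact div_ne_zero hyx hyx'
  have hρi : ρ⁻¹ ≠ 0 := inv_ne_zero hρ0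
  set u : ℤ → ℂ := fun m => hfun a b ε x k m with hu
  have hu0 : ∀ m, u m ≠ 0 := by
    intro m
    apply mul_ne_zero (mul_ne_zero _ _)
    · split
      · exact one_ne_zero
      · exact div_ne_zero (hadd _ _ hex') (hsub _ _ hex)
    · exact zpow_ne_zero _ (div_ne_zero (hsub _ _ hax) (hadd _ _ hax'))
    · exact zpow_ne_zero _ (div_ne_zero (hsub _ _ hbx) (hadd _ _ hbx'))
  have hhy0 : ∀ m, hfun a b ε y k m ≠ 0 := by
    intro m
    apply mul_ne_zero (mul_ne_zero _ _)
    · split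
      · exact one_ne_zero
      · exact div_ne_zero (hadd _ _ hey') (hsub _ _ (Ne.symm (hey ∘ Eq.symm)))
    · exact zpow_ne_zero _ (div_ne_zero (hsub _ _ hay) (hadd _ _ hay'))
    · exact zpow_ne_zero _ (div_ne_zero (hsub _ _ hby) (hadd _ _ hby'))
  -- the quotient simplifies
  have hq : ∀ m : ℤ, z k m / hfun a b ε y k m =
      (ρ * u m - C) / (ρ⁻¹ * u m - C) := by
    intro m
    rw [hz k m, div_div, mul_comm (hfun a b ε y k m),
      mul_div_mul_right _ _ (hhy0 m)]
  -- limits of u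
  have hlim1 : Tendsto u atTop (𝓝 0) := by
    have := aux_tendsto ((a - x) / (a + x)) ((b - x) / (b + x)) ((ε + x) / (ε - x)) hB k
    exact this
  have hlim2 : Tendsto (fun m => (u m)⁻¹) atBot (𝓝 0) := by
    have h1 := aux_tendsto ((a - x) / (a + x))⁻¹ ((b - x) / (b + x)) ((ε + x) / (ε - x))⁻¹ hB k
    have h2 := h1.comp tendsto_neg_atBot_atTop
    refine h2.congr fun m => ?_
    show _ = (u m)⁻¹
    simp only [hu, Function.comp_apply, hfun, mul_inv, inv_zpow, zpow_neg,
      apply_ite (Inv.inv : ℂ → ℂ), inv_one]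
    congr 2
    simp [Int.even_add, even_neg]
  constructor
  · -- atTop
    have hden : Tendsto (fun m => ρ⁻¹ * u m - C) atTop (𝓝 (-C)) := by
      have := (hlim1.const_mul ρ⁻¹).sub_const C
      simpa using this
    have hnum : Tendsto (fun m => ρ * u m - C) atTop (𝓝 (-C)) := by
      have := (hlim1.const_mul ρ).sub_const C
      simpa using this
    refine ⟨hden.eventually_ne (neg_ne_zero.mpr hC), ?_⟩
    have := hnum.div hden (neg_ne_zero.mpr hC)
    rw [neg_div_neg_eq, div_self hC] at this
    refine this.congr fun m => ?_
    simp only [Pi.div_apply]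
    exact (hq m).symm
  · -- atBot
    have hden : Tendsto (fun m => ρ⁻¹ - C * (u m)⁻¹) atBot (𝓝 ρ⁻¹) := by
      have := (hlim2.const_mul C).const_sub ρ⁻¹
      simpa using this
    have hnum : Tendsto (fun m => ρ - C * (u m)⁻¹) atBot (𝓝 ρ) := by
      have := (hlim2.const_mul C).const_sub ρ
      simpa using this
    have hfac : ∀ m : ℤ, ρ⁻¹ * u m - C = u m * (ρ⁻¹ - C * (u m)⁻¹) := by
      intro m
      field_simp [hu0 m]
      try ring
    constructor
    · filter_upwards [hden.eventually_ne hρi] with m hm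
      rw [hfac m]
      exact mul_ne_zero (hu0 m) hm
    · have hlim := hnum.div hden hρi
      have hval : ρ / ρ⁻¹ = (y - x) ^ 2 / (y + x) ^ 2 := by
        rw [div_eq_mul_inv, inv_inv, hρ, div_mul_div_comm, ← sq, ← sq]
      rw [hval] at hlim
      refine hlim.congr fun m => ?_
      simp only [Pi.div_apply]
      have hfac2 : ρ * u m - C = u m * (ρ - C * (u m)⁻¹) := by
        field_simp [hu0 m]; try ring
      rw [hq m, hfac m, hfac2, mul_div_mul_left _ _ (hu0 m)]
end

section
/- For α, β ∈ ℂ define the discrete cubic z : ℤ² → ℂ by z_{k,m} = (k+1)k(k−1)·α³ + 3k²m·α²β + 3km²·αβ² + (m+1)m(m−1)·β³. Then for all (k, m) ∈ ℤ² the identity α²·(z_{k,m+1} − z_{k,m})·(z_{k+1,m} − z_{k+1,m+1}) = β²·(z_{k,m} − z_{k+1,m})·(z_{k+1,m+1} − z_{k,m+1}) holds; i.e. wherever its quadrilaterals are nondegenerate the discrete cubic is a discrete conformal map with cross-ratio β²/α². -/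
/-!
With `w = kα + mβ` the discrete cubic is `w³ − kα³ − mβ³`, so its edges are
`z_{k+1,m} − z_{k,m} = 3α·w(w + α)` and `z_{k,m+1} − z_{k,m} = 3β·w(w + β)`. Both sides of the
cross-ratio identity then equal `−9α²β²·w(w + α)(w + β)(w + α + β)`.
-/

section DiscreteCubic

variable {R : Type*} [CommRing R]

def discreteCubic (α β : R) (k m : ℤ) : R :=
  (k * α + m * β) ^ 3 - k * α ^ 3 - m * β ^ 3

theorem discreteCubic_eq_polynomial (α β : R) (k m : ℤ) :
    discreteCubic α β k m =
      ((k : R) + 1) * (k : R) * ((k : R) - 1) * α ^ 3 +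
      3 * (k : R) ^ 2 * (m : R) * α ^ 2 * β +
      3 * (k : R) * (m : R) ^ 2 * α * β ^ 2 +
      ((m : R) + 1) * (m : R) * ((m : R) - 1) * β ^ 3 := by
  unfold discreteCubic
  ring

theorem discreteCubic_succ_left (α β : R) (k m : ℤ) :
    discreteCubic α β (k + 1) m =
      discreteCubic α β k m + 3 * α * (k * α + m * β) * (k * α + m * β + α) := by
  unfold discreteCubic
  push_cast
  ring

theorem discreteCubic_succ_right (α β : R) (k m : ℤ) :
    discreteCubic α β k (m + 1) =
      discreteCubic α β k m + 3 * β * (k * α + m * β) * (k * α + m * β + β) := by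
  unfold discreteCubic
  push_cast
  ring

end DiscreteCubic

/-- The discrete cubic `z_{k,m} = (k+1)k(k−1)α³ + 3k²m·α²β + 3km²·αβ² + (m+1)m(m−1)β³`
satisfies `α²·(z_{k,m+1} − z_{k,m})·(z_{k+1,m} − z_{k+1,m+1})
= β²·(z_{k,m} − z_{k+1,m})·(z_{k+1,m+1} − z_{k,m+1})` for all `(k, m)`; i.e. wherever
its quadrilaterals are nondegenerate it is a discrete conformal map of cross-ratio
`β²/α²`. -/
theorem discreteCubic_crossRatio (α β : ℂ)
    (z : ℤ → ℤ → ℂ)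
    (hz : ∀ k m : ℤ, z k m =
      ((k : ℂ) + 1) * (k : ℂ) * ((k : ℂ) - 1) * α ^ 3 +
      3 * (k : ℂ) ^ 2 * (m : ℂ) * α ^ 2 * β +
      3 * (k : ℂ) * (m : ℂ) ^ 2 * α * β ^ 2 +
      ((m : ℂ) + 1) * (m : ℂ) * ((m : ℂ) - 1) * β ^ 3) :
    ∀ k m : ℤ,
      α ^ 2 * ((z k (m+1) - z k m) * (z (k+1) m - z (k+1) (m+1))) =
      β ^ 2 * ((z k m - z (k+1) m) * (z (k+1) (m+1) - z k (m+1))) := by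
  intro k m
  obtain rfl : z = discreteCubic α β :=
    funext₂ fun k m => (hz k m).trans (discreteCubic_eq_polynomial α β k m).symm
  simp only [discreteCubic_succ_left, discreteCubic_succ_right]
  push_cast
  ring
end

section
/- Let α, β ∈ ℂ ∖ {0}, let z : ℤ² → ℂ be a discrete conformal map with cross-ratio q = β²/α², and let λ ∈ ℂ ∖ {0}. For k, m ∈ ℕ define the extended frame along the canonical path by Φ_{k,m}(λ) = (U_{0,0}(λ)·U_{1,0}(λ)⋯U_{k−1,0}(λ)) · (V_{k,0}(λ)·V_{k,1}(λ)⋯V_{k,m−1}(λ)) (empty products being the identity). Then: (i) Φ_{k+1,m}(λ) = Φ_{k,m}(λ)·U_{k,m}(λ) for all k, m ∈ ℕ (so Φ is independent of the lattice path used to define it, and satisfies both recursions Φ_{k+1,m} = Φ_{k,m}U_{k,m}, Φ_{k,m+1} = Φ_{k,m}V_{k,m}); and (ii) replacing each factor by its value at λ = ∞, i.e. U_{k,m}(∞) = [[1, 0], [u_{k,m}, 1]] and V_{k,m}(∞) = [[1, 0], [v_{k,m}, 1]], the corresponding product equals [[1, 0], [z_{k,m} − z_{0,0}, 1]]; in particular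 if z_{0,0} = 0 then z is recovered from the first column of Φ_{k,m}(∞). -/
open Matrix

lemma UVcomm (α β lam u v u' v' : ℂ) (hlam : lam ≠ 0)
    (hu : u ≠ 0) (hv : v ≠ 0) (hu' : u' ≠ 0) (hv' : v' ≠ 0)
    (hsum : u + v' = v + u') (hq : α ^ 2 * (v * v') = β ^ 2 * (u * u')) :
    Umat α u lam * Vmat β v' lam = Vmat β v lam * Umat α u' lam := by
  ext i j
  fin_cases i <;> fin_cases j <;>
    simp only [Umat, Vmat, Matrix.mul_apply, Fin.sum_univ_two, Matrix.cons_val',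
      Matrix.cons_val_zero, Matrix.cons_val_one, Matrix.head_cons, Matrix.head_fin_const,
      Matrix.empty_val', Matrix.cons_val_fin_one, Matrix.of_apply, Fin.zero_eta, Fin.mk_one,
      Matrix.cons_val] <;> field_simp
  · linear_combination hq
  · linear_combination (u' - u) * hq - β ^ 2 * u * u' * hsum
  · exact hsum
  · linear_combination -hq

lemma Lmul (a b : ℂ) : !![(1:ℂ), 0; a, 1] * !![(1:ℂ), 0; b, 1] = !![1, 0; a + b, 1] := by
  rw [Matrix.mul_fin_two]; norm_num [add_comm]

lemma Lprod (f : ℕ → ℂ) (n : ℕ) :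
    ((List.range n).map (fun i => !![(1:ℂ), 0; f i, 1])).prod =
      !![1, 0; ∑ i ∈ Finset.range n, f i, 1] := by
  induction n with
  | zero => simp [Matrix.one_fin_two]
  | succ n ih =>
      rw [List.range_succ, List.map_append, List.prod_append, Finset.sum_range_succ]
      simp [ih, Lmul]

/-- The extended frame `Φ_{k,m}(λ)`, defined along the canonical lattice path as
`Φ_{k,m} = (U_{0,0}⋯U_{k−1,0})·(V_{k,0}⋯V_{k,m−1})`, satisfies the recursion
`Φ_{k+1,m} = Φ_{k,m}·U_{k,m}` (so it is lattice-path independent), and replacing each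
factor by its value at `λ = ∞` the product equals `[[1, 0], [z_{k,m} − z_{0,0}, 1]]`;
in particular if `z_{0,0} = 0` then `z` is recovered from the first column of
`Φ_{k,m}(∞)`. -/
theorem extendedFrame_recursion (α β : ℂ) (hα : α ≠ 0) (hβ : β ≠ 0)
    (z : ℤ → ℤ → ℂ) (hz : IsDCM (β ^ 2 / α ^ 2) z)
    (lam : ℂ) (hlam : lam ≠ 0)
    (u v : ℤ → ℤ → ℂ)
    (hu : ∀ k m : ℤ, u k m = z (k+1) m - z k m)
    (hv : ∀ k m : ℤ, v k m = z k (m+1) - z k m)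
    (Φ : ℕ → ℕ → Matrix (Fin 2) (Fin 2) ℂ)
    (hΦ : ∀ k m : ℕ, Φ k m =
      ((List.range k).map (fun i : ℕ => Umat α (u (i : ℤ) 0) lam)).prod *
      ((List.range m).map (fun j : ℕ => Vmat β (v (k : ℤ) (j : ℤ)) lam)).prod)
    (Φinf : ℕ → ℕ → Matrix (Fin 2) (Fin 2) ℂ)
    (hΦinf : ∀ k m : ℕ, Φinf k m =
      ((List.range k).map (fun i : ℕ => !![1, 0; u (i : ℤ) 0, 1])).prod *
      ((List.range m).map (fun j : ℕ => !![1, 0; v (k : ℤ) (j : ℤ), 1])).prod) :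
    (∀ k m : ℕ, Φ (k + 1) m = Φ k m * Umat α (u (k : ℤ) (m : ℤ)) lam) ∧
    (∀ k m : ℕ, Φinf k m = !![1, 0; z (k : ℤ) (m : ℤ) - z 0 0, 1]) := by
  obtain ⟨-, -, hC⟩ := hz
  have key : ∀ k m : ℤ, Umat α (u k m) lam * Vmat β (v (k+1) m) lam =
      Vmat β (v k m) lam * Umat α (u k (m+1)) lam := by
    intro k m
    obtain ⟨⟨d1, d2, d3, d4, d5, d6⟩, hc⟩ := hC k m
    apply UVcomm _ _ _ _ _ _ _ hlam
    · rw [hu]; exact sub_ne_zero_of_ne (Ne.symm d1)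
    · rw [hv]; exact sub_ne_zero_of_ne (Ne.symm d2)
    · rw [hu]; exact sub_ne_zero_of_ne (Ne.symm d6)
    · rw [hv]; exact sub_ne_zero_of_ne (Ne.symm d5)
    · rw [hu, hv, hu, hv]; ring
    · rw [hu, hv, hu, hv]
      field_simp at hc
      linear_combination -hc
  have swap : ∀ (k m : ℕ),
      Umat α (u (k : ℤ) 0) lam *
        ((List.range m).map (fun j : ℕ => Vmat β (v ((k : ℤ)+1) (j : ℤ)) lam)).prod =
      ((List.range m).map (fun j : ℕ => Vmat β (v (k : ℤ) (j : ℤ)) lam)).prod *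
        Umat α (u (k : ℤ) (m : ℤ)) lam := by
    intro k m
    induction m with
    | zero => simp
    | succ m ih =>
        rw [List.range_succ, List.map_append, List.map_append, List.prod_append,
          List.prod_append]
        simp only [List.map_cons, List.map_nil, List.prod_cons, List.prod_nil, mul_one]
        rw [← mul_assoc, ih, mul_assoc, key, ← mul_assoc]
        push_cast
        ring_nf
  constructor
  · intro k m
    rw [hΦ (k+1) m, hΦ k m, List.range_succ, List.map_append, List.prod_append]
    simp only [List.map_cons, List.map_nil, List.prod_cons, List.prod_nil, mul_one]
    push_cast
    rw [mul_assoc, mul_assoc, swap k m]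
  · intro k m
    have s1 : ∑ i ∈ Finset.range k, u (i : ℤ) 0 = z (k : ℤ) 0 - z 0 0 := by
      have t : ∑ i ∈ Finset.range k, u (i : ℤ) 0 = z (k : ℤ) 0 - z ((0 : ℕ) : ℤ) 0 := by
        rw [← Finset.sum_range_sub (f := fun n : ℕ => z (n : ℤ) 0) k]
        exact Finset.sum_congr rfl fun i _ => by rw [hu]; push_cast; ring
      simpa using t
    have s2 : ∑ j ∈ Finset.range m, v (k : ℤ) (j : ℤ) = z (k : ℤ) (m : ℤ) - z (k : ℤ) 0 := by
      have t : ∑ j ∈ Finset.range m, v (k : ℤ) (j : ℤ) =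
          z (k : ℤ) (m : ℤ) - z (k : ℤ) ((0 : ℕ) : ℤ) := by
        rw [← Finset.sum_range_sub (f := fun n : ℕ => z (k : ℤ) (n : ℤ)) m]
        exact Finset.sum_congr rfl fun j _ => by rw [hv]; push_cast; ring
      simpa using t
    rw [hΦinf, Lprod (fun i : ℕ => u (i : ℤ) 0), Lprod (fun j : ℕ => v (k : ℤ) (j : ℤ)),
      s1, s2, Lmul]
    congr 1
    ring
end
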